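/- arXiv:1709.03771 — 5 statements merged into one kernel-verified Lean document; each statement's English description precedes it below -/
import Mathlib

section
/- For every n ≥ 2, every complex root z of the trinomial G_n(X) = -1 + X + X^n satisfies 1 - 2(log n)/n ≤ |z| ≤ 1 + 2(log 2)/n. -/
/-! For `r = ‖z‖` the equation `z ^ n = 1 - z` gives `1 - r ≤ r ^ n ≤ 1 + r`.
If `r < 1 - 2 log n / n`, then `r ^ n ≤ (1 - 2 log n / n) ^ n ≤ exp (-2 log n) = n⁻²`,
too small for `1 - r ≤ r ^ n`. If `r > a := 1 + 2 log 2 / n`, then Bernoulli's inequality gives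
`a ^ n ≥ a ^ 2 (1 + (n - 2)(a - 1)) > 1 + a`, and `x ^ n - x` grows past `a`, so `r ^ n > 1 + r`. -/

open Real

theorem norm_pow_bounds_of_pow_eq_one_sub {z : ℂ} {n : ℕ} (h : z ^ n = 1 - z) :
    1 - ‖z‖ ≤ ‖z‖ ^ n ∧ ‖z‖ ^ n ≤ 1 + ‖z‖ := by
  rw [← norm_pow, h]
  constructor
  · simpa using norm_sub_norm_le (1 : ℂ) z
  · simpa using norm_sub_le (1 : ℂ) z

theorem one_sub_two_mul_log_div_pow_le {n : ℕ} (hn : 0 < n) (h : 2 * log n ≤ n) :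
    (1 - 2 * log n / n) ^ n ≤ 1 / (n : ℝ) ^ 2 := by
  have hn' : (0 : ℝ) < n := by exact_mod_cast hn
  calc (1 - 2 * log n / n) ^ n ≤ exp (-(2 * log n)) := one_sub_div_pow_le_exp_neg h
    _ = 1 / (n : ℝ) ^ 2 := by
      rw [exp_neg, ← log_rpow hn', exp_log (by positivity)]
      norm_cast
      simp

theorem inv_sq_le_two_mul_log_div {n : ℕ} (hn : 2 ≤ n) : 1 / (n : ℝ) ^ 2 ≤ 2 * log n / n := by
  have hn' : (2 : ℝ) ≤ n := by exact_mod_cast hn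
  have hlog : log 2 ≤ log n := log_le_log (by norm_num) hn'
  rw [div_le_div_iff₀ (by positivity) (by positivity)]
  nlinarith [log_two_gt_d9]

theorem one_sub_two_mul_log_div_le_of_one_sub_le_pow {r : ℝ} {n : ℕ} (hn : 2 ≤ n) (hr : 0 ≤ r)
    (h : 1 - r ≤ r ^ n) : 1 - 2 * log n / n ≤ r := by
  by_contra! hlt
  have hn' : (0 : ℝ) < n := by positivity
  have hlog : 2 * log n ≤ n := by
    have := hr.trans hlt.le
    rwa [sub_nonneg, div_le_one hn'] at this
  have := calc 1 - r ≤ r ^ n := h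
    _ ≤ (1 - 2 * log n / n) ^ n := pow_le_pow_left₀ hr hlt.le n
    _ ≤ 1 / (n : ℝ) ^ 2 := one_sub_two_mul_log_div_pow_le (by omega) hlog
    _ ≤ 2 * log n / n := inv_sq_le_two_mul_log_div hn
  linarith

theorem one_add_lt_pow_of_le {a r : ℝ} {n : ℕ} (ha : 0 < a) (har : a ≤ r) (h : 1 + a < a ^ n) :
    1 + r < r ^ n := by
  obtain _ | n := n
  · rw [pow_zero] at h; linarith
  have ha1 : 1 ≤ a ^ n := by
    by_contra! h'
    rw [pow_succ] at h
    nlinarith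
  calc 1 + r = 1 + a + (r - a) := by ring
    _ < a ^ (n + 1) + a ^ n * (r - a) := by nlinarith
    _ = a ^ n * r := by ring
    _ ≤ r ^ n * r := by gcongr; linarith
    _ = r ^ (n + 1) := (pow_succ r n).symm

theorem sq_mul_one_add_mul_le_pow {c : ℝ} (hc : -2 ≤ c) (n : ℕ) :
    (1 + c) ^ 2 * (1 + n * c) ≤ (1 + c) ^ (n + 2) := by
  rw [pow_add, mul_comm]
  gcongr
  exact one_add_mul_le_pow hc n

theorem one_add_lt_pow_of_mul_eq_two_log_two {c : ℝ} {n : ℕ} (hn : 2 ≤ n)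
    (hc : n * c = 2 * log 2) :
    1 + (1 + c) < (1 + c) ^ n := by
  obtain ⟨m, rfl⟩ := Nat.exists_eq_add_of_le' hn
  have hc0 : 0 < c := by
    have : (0 : ℝ) < (m + 2 : ℕ) := by positivity
    nlinarith [log_two_gt_d9]
  have hmc : m * c = 2 * log 2 - 2 * c := by push_cast at hc; linarith
  have hcL : c ≤ log 2 := by nlinarith [log_two_gt_d9]
  calc 1 + (1 + c) < (1 + c) ^ 2 * (1 + m * c) := by
        rw [hmc]
        -- a cubic in `c`, concave on `[0, log 2]` and positive at both ends
        nlinarith [mul_nonneg hc0.le (sub_nonneg.2 hcL), log_two_gt_d9, log_two_lt_d9,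
          mul_nonneg (mul_nonneg hc0.le hc0.le) (sub_nonneg.2 hcL)]
    _ ≤ (1 + c) ^ (m + 2) := sq_mul_one_add_mul_le_pow (by linarith) m

/-- For every `n ≥ 2`, every complex root `z` of `-1 + X + X^n` satisfies
`1 - 2 log n / n ≤ |z| ≤ 1 + 2 log 2 / n`. -/
theorem stmt_3 (n : ℕ) (hn : 2 ≤ n) (z : ℂ) (hz : -1 + z + z ^ n = 0) :
    1 - 2 * Real.log n / n ≤ ‖z‖ ∧
      ‖z‖ ≤ 1 + 2 * Real.log 2 / n := by
  obtain ⟨hlower, hupper⟩ := norm_pow_bounds_of_pow_eq_one_sub (by linear_combination hz)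
  refine ⟨one_sub_two_mul_log_div_le_of_one_sub_le_pow hn (norm_nonneg z) hlower, ?_⟩
  by_contra! hlt
  have hc : (n : ℝ) * (2 * log 2 / n) = 2 * log 2 := by field_simp
  have hkey := one_add_lt_pow_of_mul_eq_two_log_two hn hc
  linarith [one_add_lt_pow_of_le (by positivity) hlt.le hkey]
end

section
/- For n ≥ 2, the number θ_n^{-1}, where θ_n is the unique root of -1 + X + X^n in (0,1), is the dominant root of the polynomial G_n*(X) = 1 + X^{n-1} - X^n, and every other complex root of G_n* has modulus strictly less than θ_n^{-1}; in particular θ_n^{-1} is a Perron number. -/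
/-!
Substituting `w = z⁻¹` turns the roots of `G_n*` into the roots of `G_n(w) = -1 + w + w^n`.
For such a `w`, `1 = ‖w + w^n‖ ≤ ‖w‖ + ‖w‖^n`, and `x ↦ x + x^n` is strictly increasing on
`[0, ∞)`, so `θ_n ≤ ‖w‖`. If `‖w‖ = θ_n`, then `‖w‖ + ‖1 - w‖ = θ_n + θ_n^n = 1`, which puts `w`
on the real segment `[0, 1]`, hence `w = θ_n`. Integrality comes from the monic polynomial
`X^n - X^(n-1) - 1`.
-/

open Polynomial

theorem one_add_pow_pred_sub_pow_eq_zero_iff {K : Type*} [Field K] {n : ℕ} (hn : n ≠ 0)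
    {z : K} (hz : z ≠ 0) : 1 + z ^ (n - 1) - z ^ n = 0 ↔ -1 + z⁻¹ + z⁻¹ ^ n = 0 := by
  obtain ⟨m, rfl⟩ : ∃ m, n = m + 1 := ⟨n - 1, (Nat.succ_pred_eq_of_ne_zero hn).symm⟩
  have hzz : z * z⁻¹ = 1 := mul_inv_cancel₀ hz
  have hzzm : z ^ m * z⁻¹ ^ m = 1 := by rw [← mul_pow, hzz, one_pow]
  have key : (1 + z ^ m - z ^ (m + 1)) * z⁻¹ ^ (m + 1) = -1 + z⁻¹ + z⁻¹ ^ (m + 1) := by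
    linear_combination (z⁻¹ - z * z⁻¹) * hzzm - hzz
  rw [Nat.add_sub_cancel, ← key, mul_eq_zero, or_iff_left (pow_ne_zero _ (inv_ne_zero hz))]

theorem ne_zero_of_one_add_pow_pred_sub_pow_eq_zero {K : Type*} [Field K] [CharZero K] {n : ℕ}
    {z : K} (h : 1 + z ^ (n - 1) - z ^ n = 0) : z ≠ 0 := by
  rintro rfl
  rcases n with _ | _ | n <;> norm_num at h

theorem isIntegral_of_one_add_pow_pred_sub_pow_eq_zero {R : Type*} [CommRing R] {n : ℕ}
    (hn : n ≠ 0) {x : R} (h : 1 + x ^ (n - 1) - x ^ n = 0) : IsIntegral ℤ x := by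
  refine ⟨X ^ n - (X ^ (n - 1) + 1), monic_X_pow_sub ?_, ?_⟩
  · refine (degree_add_le _ _).trans_lt (max_lt ?_ ?_)
    · rw [degree_X_pow]
      exact_mod_cast Nat.sub_one_lt hn
    · exact degree_C_le.trans_lt (by exact_mod_cast Nat.pos_of_ne_zero hn)
  · simp only [eval₂_sub, eval₂_add, eval₂_X_pow, eval₂_one]
    linear_combination -h

theorem strictMonoOn_add_pow (n : ℕ) : StrictMonoOn (fun x : ℝ => x + x ^ n) (Set.Ici 0) :=
  (strictMono_id.strictMonoOn _).add_monotone fun _ ha _ _ hab => pow_le_pow_left₀ ha hab n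

theorem Complex.eq_norm_of_norm_add_norm_one_sub_eq_one {w : ℂ} (h : ‖w‖ + ‖1 - w‖ = 1) :
    w = ‖w‖ := by
  have hdist : dist 0 w + dist w 1 = dist (0 : ℂ) 1 := by
    simpa [dist_eq_norm, norm_sub_rev w 1] using h
  obtain ⟨t, ⟨ht0, -⟩, rfl⟩ :=
    segment_eq_image ℝ (0 : ℂ) 1 ▸ (dist_add_dist_eq_iff.1 hdist).mem_segment
  simp [abs_of_nonneg ht0]

theorem lt_norm_of_neg_one_add_add_pow_eq_zero {n : ℕ} {θ : ℝ} (hθ : 0 ≤ θ) (hθroot : -1 + θ + θ ^ n = 0) {w : ℂ}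
    (hw : -1 + w + w ^ n = 0) (hne : w ≠ θ) : θ < ‖w‖ := by
  have hwn : w ^ n = 1 - w := by linear_combination hw
  have hle : θ ≤ ‖w‖ := by
    rw [← (strictMonoOn_add_pow n).le_iff_le hθ (norm_nonneg w)]
    calc θ + θ ^ n = ‖w + w ^ n‖ := by rw [hwn, add_sub_cancel, norm_one]; linarith
      _ ≤ ‖w‖ + ‖w‖ ^ n := by rw [← norm_pow]; exact norm_add_le _ _
  refine hle.lt_of_ne fun heq => hne ?_
  have hsum : ‖w‖ + ‖1 - w‖ = 1 := by rw [← hwn, norm_pow, ← heq]; linarith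
  rw [Complex.eq_norm_of_norm_add_norm_one_sub_eq_one hsum, ← heq]

theorem stmt_4_general (n : ℕ) (θ : ℝ) (hθ : θ ∈ Set.Ioo (0 : ℝ) 1)
    (hroot : -1 + θ + θ ^ n = 0) :
    (1 + ((θ : ℂ)⁻¹) ^ (n - 1) - ((θ : ℂ)⁻¹) ^ n = 0) ∧
      (∀ z : ℂ, 1 + z ^ (n - 1) - z ^ n = 0 → z ≠ (θ : ℂ)⁻¹ →
        ‖z‖ < θ⁻¹) ∧
      1 < θ⁻¹ ∧ IsIntegral ℤ θ⁻¹ := by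
  obtain ⟨hθ0, hθ1⟩ := hθ
  have hn : n ≠ 0 := by
    rintro rfl
    linarith [hroot, pow_zero θ]
  have hθinv : 1 + θ⁻¹ ^ (n - 1) - θ⁻¹ ^ n = 0 :=
    (one_add_pow_pred_sub_pow_eq_zero_iff hn (inv_ne_zero hθ0.ne')).2 (by rwa [inv_inv])
  refine ⟨by exact_mod_cast congrArg Complex.ofReal hθinv, fun z hz hne => ?_,
    (one_lt_inv₀ hθ0).2 hθ1, isIntegral_of_one_add_pow_pred_sub_pow_eq_zero hn hθinv⟩
  have hz0 := ne_zero_of_one_add_pow_pred_sub_pow_eq_zero hz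
  have hlt : θ < ‖z⁻¹‖ :=
    lt_norm_of_neg_one_add_add_pow_eq_zero hθ0.le hroot ((one_add_pow_pred_sub_pow_eq_zero_iff hn hz0).1 hz)
      fun h => hne (by rw [← h, inv_inv])
  rwa [norm_inv, ← lt_inv_comm₀ (norm_pos_iff.2 hz0) hθ0] at hlt

/-- For `n ≥ 2`, `θ_n⁻¹` (with `θ_n` the unique root of `-1 + X + X^n` in `(0,1)`)
is a root of `G_n*(X) = 1 + X^(n-1) - X^n`, every other complex root of `G_n*` has
modulus strictly smaller than `θ_n⁻¹`; moreover `θ_n⁻¹ > 1` is an algebraic integer,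
hence a Perron number. -/
theorem stmt_4 (n : ℕ) (hn : 2 ≤ n) (θ : ℝ) (hθ : θ ∈ Set.Ioo (0 : ℝ) 1)
    (hroot : -1 + θ + θ ^ n = 0) :
    (1 + ((θ : ℂ)⁻¹) ^ (n - 1) - ((θ : ℂ)⁻¹) ^ n = 0) ∧
      (∀ z : ℂ, 1 + z ^ (n - 1) - z ^ n = 0 → z ≠ (θ : ℂ)⁻¹ →
        ‖z‖ < θ⁻¹) ∧
      1 < θ⁻¹ ∧ IsIntegral ℤ θ⁻¹ :=
  stmt_4_general n θ hθ hroot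
end

section
/- For n ≥ 2 with n ≢ 5 (mod 6), the trinomial G_n(X) = -1 + X + X^n is irreducible over ℚ; for n ≡ 5 (mod 6), G_n(X) is divisible by X² - X + 1 and the quotient G_n(X)/(X² - X + 1) is irreducible over ℚ. -/
/-!
A common complex root `z` of `P = X ^ n + X - 1` and of its mirror `1 + X ^ (n - 1) - X ^ n`
satisfies `z ^ n = 1 - z` and `z ^ (n - 1) = -z`, hence `z ^ 2 - z + 1 = 0`: it is a primitive
sixth root of unity, and such a root kills `P` exactly when `n ≡ 5 (mod 6)`. For `n ≢ 5` Ljunggren's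
criterion (a unit trinomial without common roots with its mirror is irreducible) applies directly.

For `n ≡ 5` write `P = (X ^ 2 - X + 1) * Q`. Since `X ^ 2 - X + 1` is its own mirror, the rigidity
of unit trinomials (`P * P.mirror = K * K.mirror` forces `K = ±P` or `K = ±P.mirror`) passes to `Q`.
Moreover `Q` has no common root with its mirror: such a root would be a primitive sixth root of
unity `ζ`, a double root of `P`, whereas `|P'(ζ)| = |n ζ ^ (n - 1) + 1| ≥ n - 1 > 0`. Both facts
together give the irreducibility of `Q` as in Ljunggren's argument.
-/

open Polynomial

namespace Polynomial

section Mirror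

variable {R : Type*} [CommRing R] [NoZeroDivisors R]

def MirrorRigid (p : R[X]) : Prop :=
  ∀ k, p * p.mirror = k * k.mirror → k = p ∨ k = -p ∨ k = p.mirror ∨ k = -p.mirror

theorem MirrorRigid.of_mul_left {φ q : R[X]} (hφ0 : φ ≠ 0) (hφ : φ.mirror = φ)
    (h : MirrorRigid (φ * q)) : MirrorRigid q := by
  intro k hk
  have := h (φ * k) (by
    rw [mirror_mul_of_domain, mirror_mul_of_domain, hφ]
    linear_combination φ * φ * hk)
  simpa only [mirror_mul_of_domain, hφ, ← mul_neg, mul_right_inj' hφ0] using this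

end Mirror

theorem IsUnitTrinomial.mirrorRigid {p : ℤ[X]} (hp : p.IsUnitTrinomial) : MirrorRigid p := by
  intro q hpq
  obtain ⟨k', m', n', hkm', hmn', x, y, z, hq⟩ := (isUnitTrinomial_iff'' hpq).mp hp
  obtain ⟨k, m, n, hkm, hmn, u, v, w, hp⟩ := hp
  have hk : k = k' := by
    have := congrArg natTrailingDegree hpq
    rw [natTrailingDegree_mul_mirror, natTrailingDegree_mul_mirror, hp, hq,
      trinomial_natTrailingDegree hkm hmn u.ne_zero,
      trinomial_natTrailingDegree hkm' hmn' x.ne_zero] at this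
    omega
  have hn : n = n' := by
    have := congrArg natDegree hpq
    rw [natDegree_mul_mirror, natDegree_mul_mirror, hp, hq, trinomial_natDegree hkm hmn w.ne_zero,
      trinomial_natDegree hkm' hmn' z.ne_zero] at this
    omega
  subst hk hn
  obtain rfl | rfl : y = v ∨ y = -v := by
    rcases Int.units_eq_one_or v with rfl | rfl <;> rcases Int.units_eq_one_or y with rfl | rfl <;>
      simp
  · rcases irreducible_aux3 hkm hmn hkm' hmn' u y w x z hp hq hpq with h | h <;> simp [h]
  · have hp' : -p = trinomial k m n ↑(-u) ↑(-v) ↑(-w) := by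
      rw [hp]; simp only [trinomial_def, Units.val_neg, C_neg]; ring
    rw [← neg_mul_neg, ← mirror_neg] at hpq
    rcases irreducible_aux3 hkm hmn hkm' hmn' (-u) (-v) (-w) x z hp' hq hpq with h | h
    · exact Or.inr (Or.inl h)
    · exact Or.inr (Or.inr (Or.inr (h.trans p.mirror_neg)))

theorem isRelPrime_of_forall_not_common_root {p r : ℤ[X]} (hp : IsUnit p.leadingCoeff)
    (h : ∀ z : ℂ, ¬(aeval z p = 0 ∧ aeval z r = 0)) : IsRelPrime p r := by
  intro d hdp hdr
  have hd : IsUnit d.leadingCoeff := by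
    obtain ⟨e, rfl⟩ := hdp
    exact isUnit_of_mul_isUnit_left (leadingCoeff_mul d e ▸ hp)
  by_contra hdu
  have hdeg : 0 < (d.map (algebraMap ℤ ℂ)).degree := by
    rw [degree_map_eq_of_injective (algebraMap ℤ ℂ).injective_int, ← natDegree_pos_iff_degree_pos,
      Nat.pos_iff_ne_zero]
    intro h0
    rw [eq_C_of_natDegree_eq_zero h0, isUnit_C] at hdu
    exact hdu (by rwa [leadingCoeff, h0] at hd)
  obtain ⟨z, hz⟩ := Complex.exists_root hdeg
  rw [IsRoot, eval_map_algebraMap] at hz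
  exact h z ⟨aeval_eq_zero_of_dvd_aeval_eq_zero hdp hz, aeval_eq_zero_of_dvd_aeval_eq_zero hdr hz⟩

theorem monic_X_sq_sub_X_add_one {R : Type*} [Ring R] : (X ^ 2 - X + 1 : R[X]).Monic := by
  monicity!

theorem mirror_X_sq_sub_X_add_one : (X ^ 2 - X + 1 : ℤ[X]).mirror = X ^ 2 - X + 1 := by
  have : (X ^ 2 - X + 1 : ℤ[X]) = trinomial 0 1 2 1 (-1) 1 := by
    simp only [trinomial, C_neg, C_1]; ring
  rw [this, trinomial_mirror zero_lt_one one_lt_two one_ne_zero one_ne_zero]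
  rfl

end Polynomial

theorem isPrimitiveRoot_six_iff {K : Type*} [Field K] [CharZero K] {ζ : K} :
    IsPrimitiveRoot ζ 6 ↔ ζ ^ 2 - ζ + 1 = 0 := by
  rw [← isRoot_cyclotomic_iff, cyclotomic_six]
  simp

theorem IsPrimitiveRoot.mod_six_eq_five {K : Type*} [Field K] [CharZero K] {ζ : K} {n : ℕ}
    (hζ : IsPrimitiveRoot ζ 6) (h : ζ ^ n + ζ - 1 = 0) : n % 6 = 5 := by
  have hφ : ζ ^ 2 - ζ + 1 = 0 := isPrimitiveRoot_six_iff.mp hζ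
  have hmod : ζ ^ n = ζ ^ (n % 6) := by rw [hζ.eq_orderOf, pow_mod_orderOf]
  have h5 : ζ ^ (n % 6) = ζ ^ 5 := by linear_combination h - hmod - (ζ ^ 3 + ζ ^ 2 - 1) * hφ
  exact hζ.pow_inj (Nat.mod_lt n (by norm_num)) (by norm_num) h5

theorem IsPrimitiveRoot.natCast_mul_pow_add_one_ne_zero {ζ : ℂ} {n : ℕ} (hn : 1 < n)
    (hζ : IsPrimitiveRoot ζ 6) : (n : ℂ) * ζ ^ (n - 1) + 1 ≠ 0 := by
  intro h
  have := congrArg norm (eq_neg_of_add_eq_zero_left h)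
  rw [norm_mul, norm_pow, hζ.norm'_eq_one (by norm_num), Complex.norm_natCast, norm_neg, norm_one,
    one_pow, mul_one] at this
  have : n = 1 := by exact_mod_cast this
  omega

section XPowAddXSubOne

variable {n : ℕ}

theorem X_pow_add_X_sub_one_eq_trinomial : (X ^ n + X - 1 : ℤ[X]) = trinomial 0 1 n (-1) 1 1 := by
  simp only [trinomial, C_neg, C_1]; ring

theorem isUnitTrinomial_X_pow_add_X_sub_one (hn : 1 < n) :
    (X ^ n + X - 1 : ℤ[X]).IsUnitTrinomial :=
  ⟨0, 1, n, zero_lt_one, hn, -1, 1, 1, by rw [X_pow_add_X_sub_one_eq_trinomial]; norm_num⟩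

theorem monic_X_pow_add_X_sub_one (hn : 1 < n) : (X ^ n + X - 1 : ℤ[X]).Monic := by
  rw [X_pow_add_X_sub_one_eq_trinomial]; exact trinomial_monic zero_lt_one hn

theorem natDegree_X_pow_add_X_sub_one (hn : 1 < n) : (X ^ n + X - 1 : ℤ[X]).natDegree = n := by
  rw [X_pow_add_X_sub_one_eq_trinomial]; exact trinomial_natDegree zero_lt_one hn one_ne_zero

theorem mirror_X_pow_add_X_sub_one (hn : 1 < n) :
    (X ^ n + X - 1 : ℤ[X]).mirror = 1 + X ^ (n - 1) - X ^ n := by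
  rw [X_pow_add_X_sub_one_eq_trinomial, trinomial_mirror zero_lt_one hn (by norm_num) one_ne_zero]
  simp only [trinomial, C_neg, C_1]; ring

theorem isPrimitiveRoot_of_common_root_X_pow_add_X_sub_one (hn : 1 < n) {z : ℂ}
    (h : aeval z (X ^ n + X - 1 : ℤ[X]) = 0) (h' : aeval z (X ^ n + X - 1 : ℤ[X]).mirror = 0) :
    IsPrimitiveRoot z 6 := by
  rw [mirror_X_pow_add_X_sub_one hn] at h'
  simp only [map_add, map_sub, map_one, map_pow, aeval_X] at h h'
  have hzn : z ^ n = z * z ^ (n - 1) := by rw [← pow_succ', Nat.sub_add_cancel hn.le]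
  exact isPrimitiveRoot_six_iff.mpr (by linear_combination z * h' + hzn - (1 - z) * h)

theorem irreducible_X_pow_add_X_sub_one (hn : 1 < n) (h5 : n % 6 ≠ 5) :
    Irreducible (X ^ n + X - 1 : ℤ[X]) :=
  (isUnitTrinomial_X_pow_add_X_sub_one hn).irreducible_of_coprime' fun z ⟨h, h'⟩ =>
    h5 ((isPrimitiveRoot_of_common_root_X_pow_add_X_sub_one hn h h').mod_six_eq_five
      (by simpa using h))

theorem X_sq_sub_X_add_one_dvd_X_pow_add_X_sub_one {R : Type*} [CommRing R] (h5 : n % 6 = 5) :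
    (X ^ 2 - X + 1 : R[X]) ∣ X ^ n + X - 1 := by
  obtain ⟨k, rfl⟩ : ∃ k, n = 6 * k + 5 := ⟨n / 6, by omega⟩
  have h6 : (X ^ 2 - X + 1 : R[X]) ∣ (X ^ 6) ^ k - 1 :=
    (Dvd.intro ((X + 1) * (X ^ 3 - 1)) (by ring) : _ ∣ (X ^ 6 - 1 : R[X])).trans
      (by simpa using sub_dvd_pow_sub_pow (X ^ 6 : R[X]) 1 k)
  have : (X ^ (6 * k + 5) + X - 1 : R[X]) =
      X ^ 5 * ((X ^ 6) ^ k - 1) + (X ^ 2 - X + 1) * (X ^ 3 + X ^ 2 - 1) := by ring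
  rw [this]
  exact (h6.mul_left _).add (dvd_mul_right _ _)

theorem irreducible_of_X_pow_add_X_sub_one_eq_mul (h5 : n % 6 = 5) {q : ℤ[X]}
    (hq : (X ^ n + X - 1 : ℤ[X]) = (X ^ 2 - X + 1) * q) : Irreducible q := by
  have hn : 1 < n := by omega
  have hφ0 : (X ^ 2 - X + 1 : ℤ[X]) ≠ 0 := monic_X_sq_sub_X_add_one.ne_zero
  have hqm : q.Monic :=
    monic_X_sq_sub_X_add_one.of_mul_monic_left (hq ▸ monic_X_pow_add_X_sub_one hn)
  refine irreducible_of_mirror (fun hu => ?_) ?_ ?_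
  · have := congrArg natDegree hq
    rw [natDegree_mul hφ0 hqm.ne_zero, natDegree_eq_zero_of_isUnit hu,
      natDegree_X_pow_add_X_sub_one hn,
      show (X ^ 2 - X + 1 : ℤ[X]).natDegree = 2 by compute_degree!] at this
    omega
  · exact (hq ▸ (isUnitTrinomial_X_pow_add_X_sub_one hn).mirrorRigid).of_mul_left hφ0
      mirror_X_sq_sub_X_add_one
  refine isRelPrime_of_forall_not_common_root (hqm.leadingCoeff ▸ isUnit_one) ?_
  rintro z ⟨hz, hz'⟩
  have hζ : IsPrimitiveRoot z 6 := isPrimitiveRoot_of_common_root_X_pow_add_X_sub_one hn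
    (by rw [hq, map_mul, hz, mul_zero])
    (by rw [hq, mirror_mul_of_domain, mirror_X_sq_sub_X_add_one, map_mul, hz', mul_zero])
  have hφz : aeval z (X ^ 2 - X + 1 : ℤ[X]) = 0 := by simpa using isPrimitiveRoot_six_iff.mp hζ
  have hder := congrArg (fun p => aeval z (derivative p)) hq
  simp only [derivative_mul, map_add, map_mul, hφz, hz, mul_zero, zero_mul, add_zero] at hder
  exact hζ.natCast_mul_pow_add_one_ne_zero hn (by simpa [derivative_X_pow] using hder)

end XPowAddXSubOne

/-- For `n ≥ 2` with `n ≢ 5 (mod 6)`, the trinomial `-1 + X + X^n` is irreducible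
over `ℚ`; for `n ≡ 5 (mod 6)` it is divisible by `X² - X + 1` and the quotient is
irreducible over `ℚ`. -/
theorem stmt_5 (n : ℕ) (hn : 2 ≤ n) :
    (n % 6 ≠ 5 → Irreducible (-1 + X + X ^ n : Polynomial ℚ)) ∧
      (n % 6 = 5 →
        ((X ^ 2 - X + 1 : Polynomial ℚ) ∣ (-1 + X + X ^ n) ∧
          Irreducible ((-1 + X + X ^ n : Polynomial ℚ) / (X ^ 2 - X + 1)))) := by
  have hG : (-1 + X + X ^ n : ℚ[X]) = (X ^ n + X - 1 : ℤ[X]).map (Int.castRingHom ℚ) := by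
    simp only [Polynomial.map_sub, Polynomial.map_add, Polynomial.map_pow, Polynomial.map_X,
      Polynomial.map_one]
    ring
  have hΦ : (X ^ 2 - X + 1 : ℚ[X]) = (X ^ 2 - X + 1 : ℤ[X]).map (Int.castRingHom ℚ) := by
    simp only [Polynomial.map_sub, Polynomial.map_add, Polynomial.map_pow, Polynomial.map_X,
      Polynomial.map_one]
  refine ⟨fun h5 => ?_, fun h5 => ?_⟩
  · rw [hG, ← IsPrimitive.Int.irreducible_iff_irreducible_map_cast
      (monic_X_pow_add_X_sub_one hn).isPrimitive]
    exact irreducible_X_pow_add_X_sub_one hn h5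
  obtain ⟨q, hq⟩ := X_sq_sub_X_add_one_dvd_X_pow_add_X_sub_one (R := ℤ) h5
  have hqm : q.Monic :=
    monic_X_sq_sub_X_add_one.of_mul_monic_left (hq ▸ monic_X_pow_add_X_sub_one hn)
  rw [hG, hq, Polynomial.map_mul, ← hΦ, mul_div_cancel_left₀ _ monic_X_sq_sub_X_add_one.ne_zero,
    ← IsPrimitive.Int.irreducible_iff_irreducible_map_cast hqm.isPrimitive]
  exact ⟨dvd_mul_right _ _, irreducible_of_X_pow_add_X_sub_one_eq_mul h5 hq⟩
end

section
/- Let n ≥ 2. A real number β ∈ (1, (1+√5)/2] belongs to the interval [θ_{n+1}^{-1}, θ_n^{-1}) if and only if the Rényi β-expansion of 1 has the form d_β(1) = 0.1 0^{n-1} 1 0^{n_1} 1 0^{n_2} 1 ... with every gap length n_k ≥ n - 1. -/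
/-!
Write `g_k(x) = x ^ k * (x - 1)`, strictly increasing on `[1, ∞)`. The root equation of `θ_{k+1}`
says exactly `g_k(θ_{k+1}⁻¹) = 1`, so `θ_{n+1}⁻¹ ≤ β < θ_n⁻¹` means `g_{n-1}(β) < 1 ≤ g_n(β)`.
On the digit side, `T_β` multiplies by `β` as long as the digits it produces are `0`. Since
`T_β 1 = β - 1`, the digits `t_2, …, t_n` vanish and `t_{n+1} = 1` exactly when
`g_{n-1}(β) < 1 ≤ g_n(β)`. After any digit `1` the orbit point is at most `β - 1`, so the same
bound `g_{n-1}(β) < 1` forces the next `n - 1` digits to vanish.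
-/

open Set

section Roots

lemma strictMonoOn_pow_mul_sub_one (k : ℕ) :
    StrictMonoOn (fun x : ℝ => x ^ k * (x - 1)) (Ici 1) := by
  intro a ha b hb hab
  exact mul_lt_mul' (pow_le_pow_left₀ (zero_le_one.trans ha) hab.le k) (by linarith)
    (sub_nonneg.2 ha) (pow_pos (zero_lt_one.trans_le hb) k)

variable {θ β : ℝ} {k : ℕ}

lemma inv_pow_mul_inv_sub_one_eq_one (hθ : θ ≠ 0) (h : -1 + θ + θ ^ (k + 1) = 0) :
    θ⁻¹ ^ k * (θ⁻¹ - 1) = 1 := by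
  rw [inv_pow]
  field_simp
  linear_combination -h

lemma lt_inv_iff_pow_mul_sub_one_lt_one (hθ : θ ∈ Ioo 0 1) (h : -1 + θ + θ ^ (k + 1) = 0)
    (hβ : 1 ≤ β) : β < θ⁻¹ ↔ β ^ k * (β - 1) < 1 := by
  have hθ' : θ⁻¹ ∈ Ici 1 := (one_le_inv₀ hθ.1).2 hθ.2.le
  rw [← (strictMonoOn_pow_mul_sub_one k).lt_iff_lt hβ hθ',
    inv_pow_mul_inv_sub_one_eq_one hθ.1.ne' h]

lemma inv_le_iff_one_le_pow_mul_sub_one (hθ : θ ∈ Ioo 0 1) (h : -1 + θ + θ ^ (k + 1) = 0)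
    (hβ : 1 ≤ β) : θ⁻¹ ≤ β ↔ 1 ≤ β ^ k * (β - 1) := by
  have hθ' : θ⁻¹ ∈ Ici 1 := (one_le_inv₀ hθ.1).2 hθ.2.le
  rw [← (strictMonoOn_pow_mul_sub_one k).le_iff_le hθ' hβ,
    inv_pow_mul_inv_sub_one_eq_one hθ.1.ne' h]

end Roots

noncomputable def betaMap (β x : ℝ) : ℝ := Int.fract (β * x)

/-- The paper's digit `t_i = ⌊β T_β^{i-1}(1)⌋`, indexed from `1`; `betaDigit β 0` is junk. -/
noncomputable def betaDigit (β : ℝ) (i : ℕ) : ℤ := ⌊β * (betaMap β)^[i - 1] 1⌋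

section BetaMap

variable {β x : ℝ}

lemma betaMap_iterate_mem_Icc (hx : x ∈ Icc 0 1) (i : ℕ) : (betaMap β)^[i] x ∈ Icc 0 1 := by
  cases i with
  | zero => exact hx
  | succ i =>
    rw [Function.iterate_succ_apply']
    exact ⟨Int.fract_nonneg _, (Int.fract_lt_one _).le⟩

lemma betaMap_one (h : ⌊β⌋ = 1) : betaMap β 1 = β - 1 := by
  rw [betaMap, mul_one, ← Int.self_sub_floor, h, Int.cast_one]

lemma betaMap_le_sub_one (hβ : 0 ≤ β) (hx : x ≤ 1) (h : ⌊β * x⌋ = 1) :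
    betaMap β x ≤ β - 1 := by
  rw [betaMap, ← Int.self_sub_floor, h, Int.cast_one]
  nlinarith

lemma betaMap_iterate_eq_pow_mul {k : ℕ} (h : ∀ j < k, ⌊β * (betaMap β)^[j] x⌋ = 0) :
    (betaMap β)^[k] x = β ^ k * x := by
  induction k with
  | zero => simp
  | succ k ih =>
    rw [Function.iterate_succ_apply', betaMap, ← Int.self_sub_floor, h k k.lt_succ_self,
      ih fun j hj => h j (hj.trans k.lt_succ_self)]
    simp only [Int.cast_zero, sub_zero, pow_succ]
    ring

lemma floor_mul_betaMap_iterate_eq_zero (hβ : 1 ≤ β) (hx : 0 ≤ x) {k : ℕ}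
    (h : β ^ k * x < 1) : ∀ j < k, ⌊β * (betaMap β)^[j] x⌋ = 0 := by
  induction k with
  | zero => simp
  | succ k ih =>
    have hk : β ^ k * x < 1 :=
      lt_of_le_of_lt (mul_le_mul_of_nonneg_right (pow_le_pow_right₀ hβ k.le_succ) hx) h
    intro j hj
    rcases Nat.lt_succ_iff_lt_or_eq.1 hj with hj | rfl
    · exact ih hk j hj
    · rw [betaMap_iterate_eq_pow_mul (ih hk), Int.floor_eq_zero_iff, ← mul_assoc, ← pow_succ']
      exact ⟨by positivity, h⟩

end BetaMap

section Digits

variable {β : ℝ} {m : ℕ}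

lemma betaDigit_one : betaDigit β 1 = ⌊β⌋ := by
  simp [betaDigit]

lemma betaDigit_add_two (h : ⌊β⌋ = 1) (j : ℕ) :
    betaDigit β (j + 1 + 1) = ⌊β * (betaMap β)^[j] (β - 1)⌋ := by
  rw [betaDigit, Nat.add_sub_cancel, Function.iterate_succ_apply, betaMap_one h]

lemma betaDigit_eq_zero (hβ : 1 ≤ β) (h1 : ⌊β⌋ = 1) (h : β ^ m * (β - 1) < 1) {i : ℕ}
    (hi2 : 2 ≤ i) (hi : i ≤ m + 1) : betaDigit β i = 0 := by
  obtain ⟨j, rfl⟩ : ∃ j, i = j + 1 + 1 := ⟨i - 2, by omega⟩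
  rw [betaDigit_add_two h1]
  exact floor_mul_betaMap_iterate_eq_zero hβ (by linarith) h j (by omega)

lemma betaDigit_eq_one (hβ : 1 ≤ β) (h1 : ⌊β⌋ = 1) (h : β ^ m * (β - 1) < 1)
    (h' : 1 ≤ β ^ (m + 1) * (β - 1)) : betaDigit β (m + 1 + 1) = 1 := by
  have hβ2 : β < 2 := by
    have := Int.lt_floor_add_one β
    rw [h1] at this
    exact_mod_cast this
  rw [betaDigit_add_two h1,
    betaMap_iterate_eq_pow_mul (floor_mul_betaMap_iterate_eq_zero hβ (by linarith) h),
    Int.floor_eq_iff, ← mul_assoc, ← pow_succ']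
  constructor
  · exact_mod_cast h'
  · rw [pow_succ', mul_assoc]
    push_cast
    nlinarith

lemma betaDigit_gap (hβ : 1 ≤ β) (h : β ^ m * (β - 1) < 1) {i j : ℕ} (hi : 1 ≤ i) (hij : i < j)
    (hti : betaDigit β i = 1) (htj : betaDigit β j = 1) : m + 1 ≤ j - i := by
  by_contra! hlt
  obtain ⟨p, rfl⟩ : ∃ p, i = p + 1 := ⟨i - 1, by omega⟩
  obtain ⟨q, hq, rfl⟩ : ∃ q < m, j = q + (p + 1) + 1 := ⟨j - p - 2, by omega, by omega⟩
  set y := (betaMap β)^[p] 1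
  have hy : y ∈ Icc 0 1 := betaMap_iterate_mem_Icc ⟨zero_le_one, le_rfl⟩ p
  have hTy : betaMap β y ≤ β - 1 :=
    betaMap_le_sub_one (by linarith) hy.2 (by simpa [betaDigit] using hti)
  have hsmall : β ^ m * betaMap β y < 1 :=
    lt_of_le_of_lt (mul_le_mul_of_nonneg_left hTy (by positivity)) h
  have hzero :=
    floor_mul_betaMap_iterate_eq_zero (x := betaMap β y) hβ (Int.fract_nonneg _) hsmall q hq
  rw [betaDigit, Nat.add_sub_cancel, Function.iterate_add_apply, Function.iterate_succ_apply',
    hzero] at htj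
  exact zero_ne_one htj

lemma bounds_of_betaDigit (h1 : betaDigit β 1 = 1)
    (h0 : ∀ i, 2 ≤ i → i ≤ m + 1 → betaDigit β i = 0) (hm : betaDigit β (m + 1 + 1) = 1) :
    1 ≤ β ^ (m + 1) * (β - 1) ∧ β ^ m * (β - 1) < 1 := by
  rw [betaDigit_one] at h1
  have horbit : (betaMap β)^[m] (β - 1) = β ^ m * (β - 1) :=
    betaMap_iterate_eq_pow_mul fun j hj => by
      rw [← betaDigit_add_two h1]
      exact h0 _ (by omega) (by omega)
  constructor
  · rw [betaDigit_add_two h1, horbit, Int.floor_eq_iff] at hm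
    rw [pow_succ', mul_assoc]
    exact_mod_cast hm.1
  · rw [← horbit, ← betaMap_one h1, ← Function.iterate_succ_apply,
      Function.iterate_succ_apply']
    exact Int.fract_lt_one _

lemma betaDigit_pattern_iff (hβ : 1 ≤ β) :
    (1 ≤ β ^ (m + 1) * (β - 1) ∧ β ^ m * (β - 1) < 1) ↔
      betaDigit β 1 = 1 ∧ (∀ i, 2 ≤ i → i ≤ m + 1 → betaDigit β i = 0) ∧
        betaDigit β (m + 1 + 1) = 1 ∧
        ∀ i j, 1 ≤ i → i < j → betaDigit β i = 1 → betaDigit β j = 1 → m + 1 ≤ j - i := by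
  refine ⟨fun ⟨hlow, hup⟩ => ?_, fun ⟨h1, h0, hm, _⟩ => bounds_of_betaDigit h1 h0 hm⟩
  have hβ2 : β < 2 := by
    by_contra! h2
    exact hup.not_ge (one_le_mul_of_one_le_of_one_le (one_le_pow₀ hβ) (by linarith))
  have h1 : ⌊β⌋ = 1 := Int.floor_eq_iff.2 ⟨by simpa using hβ, by norm_num [hβ2]⟩
  exact ⟨betaDigit_one.trans h1, fun i => betaDigit_eq_zero hβ h1 hup,
    betaDigit_eq_one hβ h1 hup hlow, fun i j => betaDigit_gap hβ hup⟩

end Digits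

theorem stmt_10_general (n : ℕ) (θn θn1 : ℝ)
    (hθn : θn ∈ Set.Ioo (0 : ℝ) 1) (hθnroot : -1 + θn + θn ^ n = 0)
    (hθn1 : θn1 ∈ Set.Ioo (0 : ℝ) 1) (hθn1root : -1 + θn1 + θn1 ^ (n + 1) = 0)
    (β : ℝ) (hβ1 : 1 < β) :
    (θn1⁻¹ ≤ β ∧ β < θn⁻¹) ↔
      (let t : ℕ → ℤ := fun i => ⌊β * (fun x => Int.fract (β * x))^[i - 1] 1⌋
       t 1 = 1 ∧ (∀ i, 2 ≤ i → i ≤ n → t i = 0) ∧ t (n + 1) = 1 ∧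
         ∀ i j, 1 ≤ i → i < j → t i = 1 → t j = 1 → n ≤ j - i) := by
  obtain _ | m := n
  · rw [pow_zero] at hθnroot
    linarith [hθn.1]
  rw [inv_le_iff_one_le_pow_mul_sub_one hθn1 hθn1root hβ1.le,
    lt_inv_iff_pow_mul_sub_one_lt_one hθn hθnroot hβ1.le]
  exact betaDigit_pattern_iff hβ1.le

/-- Let `n ≥ 2`, and let `θ_n`, `θ_{n+1}` be the unique roots in `(0,1)` of
`-1 + X + X^n`, `-1 + X + X^(n+1)` respectively. A real `β ∈ (1, (1+√5)/2]` belongs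
to `[θ_{n+1}⁻¹, θ_n⁻¹)` if and only if the Rényi β-expansion of 1 has the form
`0.1 0^(n-1) 1 0^(n_1) 1 0^(n_2) 1 ...` with every gap `n_k ≥ n-1` (equivalently:
`t_1 = 1`, `t_i = 0` for `2 ≤ i ≤ n`, `t_{n+1} = 1`, and any two indices carrying
digit 1 differ by at least `n`). -/
theorem stmt_10 (n : ℕ) (hn : 2 ≤ n) (θn θn1 : ℝ)
    (hθn : θn ∈ Set.Ioo (0 : ℝ) 1) (hθnroot : -1 + θn + θn ^ n = 0)
    (hθn1 : θn1 ∈ Set.Ioo (0 : ℝ) 1) (hθn1root : -1 + θn1 + θn1 ^ (n + 1) = 0)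
    (β : ℝ) (hβ1 : 1 < β) (hβ2 : β ≤ (1 + Real.sqrt 5) / 2) :
    (θn1⁻¹ ≤ β ∧ β < θn⁻¹) ↔
      (let t : ℕ → ℤ := fun i => ⌊β * (fun x => Int.fract (β * x))^[i - 1] 1⌋
       t 1 = 1 ∧ (∀ i, 2 ≤ i → i ≤ n → t i = 0) ∧ t (n + 1) = 1 ∧
         ∀ i j, 1 ≤ i → i < j → t i = 1 → t j = 1 → n ≤ j - i) :=
  stmt_10_general n θn θn1 hθn hθnroot hθn1 hθn1root β hβ1
end

section
/- Let β > 1 be a real number with 1 < β < θ_6^{-1} and let n = dyg(β) be its dynamical degree, i.e. the unique integer n ≥ 7 with θ_n^{-1} ≤ β < θ_{n-1}^{-1}. Then for n large enough, β ≥ θ_n^{-1} ≥ 1 + (log n)(1 - (log log n)/(log n))/n; in particular the house of any algebraic integer α with dyg(α) = n ≥ 260 satisfies house(α) ≥ 1 + (log n - log log n)/n. -/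
/-!
With `L = log n` and `c = (L - log L)/n` one has `(1 + c)ⁿ ≤ exp (n c) = n / L`, hence
`c (1 + c)ⁿ ≤ (L - log L)/L ≤ 1`. This makes the trinomial `-1 + X + Xⁿ`, which is strictly
increasing on `[0, ∞)`, nonnegative at `(1 + c)⁻¹`; so its root `θ_n` lies below `(1 + c)⁻¹`,
i.e. `θ_n⁻¹ ≥ 1 + c`.
-/

open Real Set

lemma strictMonoOn_neg_one_add_add_pow (n : ℕ) :
    StrictMonoOn (fun x : ℝ => -1 + x + x ^ n) (Ici 0) := by
  intro x hx y _ hxy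
  have : x ^ n ≤ y ^ n := pow_le_pow_left₀ hx hxy.le n
  dsimp only
  linarith

lemma neg_one_add_inv_add_inv_pow_nonneg {c : ℝ} (hc : 0 ≤ c) {n : ℕ}
    (h : c * (1 + c) ^ n ≤ 1) : 0 ≤ -1 + (1 + c)⁻¹ + (1 + c)⁻¹ ^ n := by
  have hpow : c ≤ (1 + c)⁻¹ ^ n := by
    rw [inv_pow, ← one_div]
    exact (le_div_iff₀ (by positivity)).mpr h
  have hinv : 1 - c ≤ (1 + c)⁻¹ := by
    rw [← one_div, le_div_iff₀ (by linarith)]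
    nlinarith
  linarith

lemma one_add_le_inv_of_root {θ c : ℝ} {n : ℕ} (hθ : 0 < θ) (hroot : -1 + θ + θ ^ n = 0)
    (hc : 0 ≤ c) (h : c * (1 + c) ^ n ≤ 1) : 1 + c ≤ θ⁻¹ := by
  rw [le_inv_comm₀ (by linarith) hθ]
  refine ((strictMonoOn_neg_one_add_add_pow n).le_iff_le hθ.le
    (mem_Ici.mpr (by positivity))).mp ?_
  simpa only [hroot] using neg_one_add_inv_add_inv_pow_nonneg hc h

lemma one_add_pow_le_exp_mul {c : ℝ} (hc : -1 ≤ c) (n : ℕ) : (1 + c) ^ n ≤ exp (n * c) := by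
  rw [exp_nat_mul]
  exact pow_le_pow_left₀ (by linarith) (by linarith [add_one_le_exp c]) n

lemma log_sub_log_log_div_nonneg {n : ℕ} (hn : 0 < log n) :
    0 ≤ (log n - log (log n)) / n :=
  div_nonneg (sub_nonneg.mpr (log_le_self hn.le)) n.cast_nonneg

lemma log_sub_log_log_div_mul_one_add_pow_le_one {n : ℕ} (hn : 1 ≤ log n) :
    (log n - log (log n)) / n * (1 + (log n - log (log n)) / n) ^ n ≤ 1 := by
  set L := log n
  have hL : 0 < L := by linarith
  have hn0 : (0 : ℝ) < n := Nat.cast_pos.mpr (Nat.pos_of_ne_zero fun h => by simp [L, h] at hL)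
  set c := (L - log L) / n
  have hc : 0 ≤ c := log_sub_log_log_div_nonneg hL
  have hnc : n * c = L - log L := mul_div_cancel₀ _ hn0.ne'
  have hexp : exp (n * c) = n / L := by rw [hnc, exp_sub, exp_log hn0, exp_log hL]
  calc c * (1 + c) ^ n ≤ c * exp (n * c) :=
        mul_le_mul_of_nonneg_left (one_add_pow_le_exp_mul (by linarith) n) hc
    _ = n * c / L := by rw [hexp, mul_div_assoc', mul_comm]
    _ = (L - log L) / L := by rw [hnc]
    _ ≤ 1 := by rw [div_le_one hL]; linarith [log_nonneg hn]

theorem stmt_19_general (n : ℕ) (hn : 260 ≤ n) (θn : ℝ)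
    (hθn : θn ∈ Set.Ioo (0 : ℝ) 1) (hθnroot : -1 + θn + θn ^ n = 0)
    (β : ℝ) (hβ1 : θn⁻¹ ≤ β) :
    1 + (Real.log n - Real.log (Real.log n)) / n ≤ θn⁻¹ ∧ θn⁻¹ ≤ β := by
  have hlog : 1 ≤ log n := by
    have : (260 : ℝ) ≤ n := by exact_mod_cast hn
    rw [le_log_iff_exp_le (by positivity)]
    linarith [exp_one_lt_d9]
  refine ⟨one_add_le_inv_of_root hθn.1 hθnroot ?_ ?_, hβ1⟩
  · exact log_sub_log_log_div_nonneg (by linarith)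
  · exact log_sub_log_log_div_mul_one_add_pow_le_one hlog

/-- Let `β` be real with dynamical degree `n = dyg(β) ≥ 260`, i.e.
`θ_n⁻¹ ≤ β < θ_{n-1}⁻¹` where `θ_m` is the unique root of `-1 + X + X^m` in `(0,1)`.
Then `β ≥ θ_n⁻¹ ≥ 1 + (log n)(1 - (log log n)/(log n))/n = 1 + (log n - log log n)/n`;
in particular the house of any algebraic integer of dynamical degree `n ≥ 260`
satisfies this lower bound. -/
theorem stmt_19 (n : ℕ) (hn : 260 ≤ n) (θn θn1 : ℝ)
    (hθn : θn ∈ Set.Ioo (0 : ℝ) 1) (hθnroot : -1 + θn + θn ^ n = 0)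
    (hθn1 : θn1 ∈ Set.Ioo (0 : ℝ) 1) (hθn1root : -1 + θn1 + θn1 ^ (n - 1) = 0)
    (β : ℝ) (hβ1 : θn⁻¹ ≤ β) (hβ2 : β < θn1⁻¹) :
    1 + (Real.log n - Real.log (Real.log n)) / n ≤ θn⁻¹ ∧ θn⁻¹ ≤ β :=
  stmt_19_general n hn θn hθn hθnroot β hβ1
end
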